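/- arXiv:1905.07463 — 2 statements merged into one kernel-verified Lean document; each statement's English description precedes it below -/
import Mathlib

section
/- Fix the dihedral group W = I₂(m), m ≥ 3. When the product X_{α…}^{(m)} is expanded in the Q-basis {δ_w : w ∈ W} of Q_W, the coefficient of δ_{α…}^{(m−2)} equals υ_α^{(2)} · S_α^{(0,m−2)}(y_α y_β) if m is even and −υ_α^{(2)} · S_α^{(0,m−2)}(y_α y_β) if m is odd. By symmetry (exchanging the roles of α and β), the coefficient of δ_{β…}^{(m−2)} in the expansion of X_{β…}^{(m)} is the corresponding expression with α and β interchanged. -/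
open Finset DihedralGroup

/-- The alternating product `a * b * a * ⋯` with `n` factors, starting with `a`. -/
def altWord {M : Type*} [Monoid M] (a b : M) : ℕ → M
  | 0 => 1
  | n + 1 => a * altWord b a n

namespace CoefAux

theorem altWord_succ_right {M : Type*} [Monoid M] (a b : M) :
    ∀ n, altWord a b (n + 1) = altWord a b n * (if Even n then a else b) := by
  intro n
  induction n generalizing a b with
  | zero => simp [altWord]
  | succ n ih =>
    show a * altWord b a (n+1) = altWord a b (n+1) * _
    rw [ih b a]
    have : (if Even n then b else a) = (if Even (n+1) then a else b) := by
      by_cases h : Even n <;> simp [h, Nat.even_add_one]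
    rw [this, ← mul_assoc]
    rfl

theorem map_altWord {M N : Type*} [Monoid M] [Monoid N] (f : M →* N) (a b : M) :
    ∀ n, f (altWord a b n) = altWord (f a) (f b) n := by
  intro n
  induction n generalizing a b with
  | zero => simp [altWord]
  | succ n ih => show f (a * altWord b a n) = f a * altWord (f b) (f a) n; rw [map_mul, ih]

/-- The outer automorphism of the dihedral group sending `r i ↦ r (-i)`, `sr i ↦ sr (1 - i)`;
it swaps `sr 0` and `sr 1`. -/
def sw {m : ℕ} : DihedralGroup m →* DihedralGroup m where
  toFun w := match w with
    | DihedralGroup.r i => DihedralGroup.r (-i)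
    | DihedralGroup.sr i => DihedralGroup.sr (1 - i)
  map_one' := by simp [one_def, -r_zero]
  map_mul' := by rintro (i | i) (j | j) <;> simp <;> ring_nf

@[simp] theorem sw_sr {m : ℕ} (i : ZMod m) : sw (sr i) = sr (1 - i) := rfl
@[simp] theorem sw_r {m : ℕ} (i : ZMod m) : sw (r i) = r (-i) := rfl

theorem sw_involutive {m : ℕ} : Function.Involutive (sw (m := m)) := by
  rintro (i | i) <;> simp


variable {m : ℕ}


/-- letter at position `n` in the word `αβαβ⋯` -/
def la (n : ℕ) : DihedralGroup m := if Even n then sr 0 else sr 1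

/-- prefix of length `n` of the word `αβαβ⋯` -/
def Pa (m : ℕ) (n : ℕ) : DihedralGroup m := altWord (sr 0) (sr 1) n

/-- prefix of length `n` of the word `βαβα⋯` -/
def Pb (m : ℕ) (n : ℕ) : DihedralGroup m := altWord (sr 1) (sr 0) n

theorem la_congr {n k : ℕ} (h : Even n ↔ Even k) : (la n : DihedralGroup m) = la k := by
  unfold la; by_cases h' : Even n
  · rw [if_pos h', if_pos (h.mp h')]
  · rw [if_neg h', if_neg (fun hh => h' (h.mpr hh))]

theorem Pa_succ (n : ℕ) : Pa m (n + 1) = Pa m n * la n := altWord_succ_right _ _ n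

theorem Pb_succ (n : ℕ) : Pb m (n + 1) = Pb m n * la (n + 1) := by
  have := altWord_succ_right (sr 1 : DihedralGroup m) (sr 0) n
  rw [Pb, Pb, this]
  congr 1
  unfold la
  by_cases h : Even n <;> simp [h, Nat.even_add_one]

theorem la_mul_self (n : ℕ) : (la n : DihedralGroup m) * la n = 1 := by
  unfold la; by_cases h : Even n <;> simp [h, one_def, -r_zero]

theorem Pa_succ_cancel (n : ℕ) : Pa m (n + 1) * la n = Pa m n := by
  rw [Pa_succ, mul_assoc, la_mul_self, mul_one]

theorem Pb_succ_cancel (n : ℕ) : Pb m (n + 1) * la (n + 1) = Pb m n := by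
  rw [Pb_succ, mul_assoc, la_mul_self, mul_one]

theorem Pa_even (t : ℕ) : Pa m (2 * t) = r (t : ZMod m) ∧ Pa m (2 * t + 1) = sr (-(t : ZMod m)) := by
  induction t with
  | zero => constructor <;> simp [Pa, altWord, one_def, -r_zero]
  | succ t ih =>
    have h1 : Pa m (2 * (t + 1)) = r ((t : ZMod m) + 1) := by
      have : 2 * (t + 1) = (2 * t + 1) + 1 := by ring
      rw [this, Pa_succ, ih.2]
      have : (la (2 * t + 1) : DihedralGroup m) = sr 1 := by
        unfold la; rw [if_neg]; simp [Nat.even_add_one, parity_simps]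
      rw [this]; simp; ring_nf
    constructor
    · rw [h1]; push_cast; ring_nf
    · have : 2 * (t + 1) + 1 = (2 * (t + 1)) + 1 := rfl
      rw [this, Pa_succ, h1]
      have : (la (2 * (t + 1)) : DihedralGroup m) = sr 0 := by
        unfold la; rw [if_pos]; exact ⟨t + 1, by ring⟩
      rw [this]; simp

theorem Pb_even (t : ℕ) : Pb m (2 * t) = r (-(t : ZMod m)) ∧ Pb m (2 * t + 1) = sr ((t : ZMod m) + 1) := by
  induction t with
  | zero => constructor <;> simp [Pb, altWord, one_def, -r_zero]
  | succ t ih =>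
    have h1 : Pb m (2 * (t + 1)) = r (-(t : ZMod m) - 1) := by
      have h2 : 2 * (t + 1) = (2 * t + 1) + 1 := by ring
      rw [h2, Pb_succ, ih.2]
      have : (la (2 * t + 1 + 1) : DihedralGroup m) = sr 0 := by
        unfold la; rw [if_pos]; exact ⟨t + 1, by ring⟩
      rw [this]; simp; ring_nf
    constructor
    · rw [h1]; push_cast; ring_nf
    · have h2 : 2 * (t + 1) + 1 = (2 * (t + 1)) + 1 := rfl
      rw [h2, Pb_succ, h1]
      have : (la (2 * (t + 1) + 1) : DihedralGroup m) = sr 1 := by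
        unfold la; rw [if_neg]; simp [Nat.even_add_one, parity_simps]
      rw [this]; simp; ring


theorem Pa_eq_Pb_top [NeZero m] : Pa m m = Pb m m := by
  rcases Nat.even_or_odd m with ⟨t, ht⟩ | ⟨t, ht⟩
  · have h2 : m = 2 * t := by omega
    subst h2
    rw [(Pa_even t).1, (Pb_even t).1]
    have h0 : ((2 * t : ℕ) : ZMod (2 * t)) = 0 := ZMod.natCast_self _
    push_cast at h0
    congr 1
    linear_combination h0
  · subst ht
    rw [(Pa_even t).2, (Pb_even t).2]
    have h0 : ((2 * t + 1 : ℕ) : ZMod (2 * t + 1)) = 0 := ZMod.natCast_self _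
    push_cast at h0
    congr 1
    linear_combination -h0

theorem Pa_ne_one [NeZero m] (k : ℕ) (hk : 0 < k) (hkm : k ≤ m) :
    Pa m k ≠ 1 ∧ Pb m k ≠ 1 := by
  rcases Nat.even_or_odd k with ⟨t, ht⟩ | ⟨t, ht⟩
  · have h2 : k = 2 * t := by omega
    subst h2
    have ht0 : 0 < t := by omega
    have htm : ¬ m ∣ t := fun hdvd => by have := Nat.le_of_dvd ht0 hdvd; omega
    constructor
    · rw [(Pa_even t).1, one_def]
      intro h
      have : (t : ZMod m) = 0 := by injection h
      exact htm ((ZMod.natCast_eq_zero_iff t m).mp this)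
    · rw [(Pb_even t).1, one_def]
      intro h
      have h' : (-(t : ZMod m)) = 0 := by injection h
      have : (t : ZMod m) = 0 := by linear_combination -h'
      exact htm ((ZMod.natCast_eq_zero_iff t m).mp this)
  · subst ht
    constructor
    · rw [(Pa_even t).2, one_def]; simp [-r_zero]
    · rw [(Pb_even t).2, one_def]; simp [-r_zero]


section Coef

variable {Q : Type*} [CommRing Q] (φ : DihedralGroup m →* RingAut Q) (ya yb : Q)

/-- `yy n` is `ya` for even `n`, `yb` for odd `n`. -/
def yy (n : ℕ) : Q := if Even n then ya else yb

/-- Coefficients of the expansion of the alternating Demazure product. -/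
def cfn : ℕ → DihedralGroup m → Q
  | 0 => fun w => if w = 1 then 1 else 0
  | n + 1 => fun w =>
      cfn n w * φ w (yy ya yb n) - cfn n (w * la n) * φ (w * la n) (yy ya yb n)

theorem cfn_zero (w : DihedralGroup m) : cfn φ ya yb 0 w = if w = 1 then 1 else 0 := rfl

theorem cfn_succ (n : ℕ) (w : DihedralGroup m) :
    cfn φ ya yb (n + 1) w =
      cfn φ ya yb n w * φ w (yy ya yb n)
        - cfn φ ya yb n (w * la n) * φ (w * la n) (yy ya yb n) := rfl

theorem yy_congr {n k : ℕ} (h : Even n ↔ Even k) : yy ya yb n = yy ya yb k := by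
  unfold yy; by_cases h' : Even n
  · rw [if_pos h', if_pos (h.mp h')]
  · rw [if_neg h', if_neg (fun hh => h' (h.mpr hh))]

/-- The support lemma: coefficients at "too long" alternating words vanish. -/
theorem cfn_long [NeZero m] (hm : 3 ≤ m) :
    ∀ n k, n < k → k ≤ m → cfn φ ya yb n (Pa m k) = 0 ∧ cfn φ ya yb n (Pb m k) = 0 := by
  intro n
  induction n with
  | zero =>
    intro k hk hkm
    constructor <;> rw [cfn_zero]
    · exact if_neg (Pa_ne_one k hk hkm).1
    · exact if_neg (Pa_ne_one k hk hkm).2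
  | succ n ih =>
    intro k hk hkm
    obtain ⟨k', rfl⟩ : ∃ k', k = k' + 1 := ⟨k - 1, by omega⟩
    have hn : Even n ↔ Even n := Iff.rfl
    constructor
    · rw [cfn_succ]
      rw [(ih (k' + 1) (by omega) hkm).1, zero_mul, zero_sub, neg_eq_zero]
      by_cases hpar : (Even n ↔ Even k')
      · rw [la_congr hpar, Pa_succ_cancel, (ih k' (by omega) (by omega)).1, zero_mul]
      · -- la n = la (k'+1)
        have hpar' : Even n ↔ Even (k' + 1) := by
          simp only [Nat.even_iff] at hpar ⊢; omega
        rw [la_congr hpar']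
        by_cases hme : k' + 1 = m
        · rw [show Pa m (k' + 1) = Pa m m from by rw [hme], Pa_eq_Pb_top,
            show Pb m m = Pb m (k' + 1) from by rw [hme], Pb_succ_cancel,
            (ih k' (by omega) (by omega)).2, zero_mul]
        · rw [← Pa_succ, (ih (k' + 2) (by omega) (by omega)).1, zero_mul]
    · rw [cfn_succ]
      rw [(ih (k' + 1) (by omega) hkm).2, zero_mul, zero_sub, neg_eq_zero]
      by_cases hpar : (Even n ↔ Even (k' + 1))
      · rw [la_congr hpar, Pb_succ_cancel, (ih k' (by omega) (by omega)).2, zero_mul]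
      · have hpark : Even n ↔ Even k' := by
          simp only [Nat.even_iff] at hpar ⊢; omega
        by_cases hme : k' + 1 = m
        · rw [show Pb m (k' + 1) = Pb m m from by rw [hme], ← Pa_eq_Pb_top,
            show Pa m m = Pa m (k' + 1) from by rw [hme], la_congr hpark,
            Pa_succ_cancel, (ih k' (by omega) (by omega)).1, zero_mul]
        · have : (la n : DihedralGroup m) = la (k' + 2) := by
            apply la_congr
            simp only [Nat.even_iff] at hpar ⊢; omega
          rw [this, ← Pb_succ, (ih (k' + 2) (by omega) (by omega)).2, zero_mul]


/-- top coefficient -/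
theorem cfn_top [NeZero m] (hm : 3 ≤ m) :
    ∀ n, n ≤ m → cfn φ ya yb n (Pa m n) =
      (-1) ^ n * ∏ j ∈ range n, φ (Pa m j) (yy ya yb j) := by
  intro n
  induction n with
  | zero => simp [cfn_zero, Pa, altWord]
  | succ n ih =>
    intro hnm
    rw [cfn_succ, (cfn_long φ ya yb hm n (n + 1) (by omega) hnm).1, zero_mul,
      Pa_succ_cancel, ih (by omega), prod_range_succ, pow_succ]
    ring

/-- second-highest coefficient -/
theorem cfn_sec [NeZero m] (hm : 3 ≤ m) (n : ℕ) (hnm : n + 1 ≤ m) :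
    cfn φ ya yb (n + 1) (Pa m n) =
      (-1) ^ n * ∏ j ∈ range (n + 1), φ (Pa m j) (yy ya yb j) := by
  rw [cfn_succ, ← Pa_succ, (cfn_long φ ya yb hm n (n + 1) (by omega) hnm).1, zero_mul,
    cfn_top φ ya yb hm n (by omega), prod_range_succ]
  ring

/-- the key coefficient -/
theorem cfn_thr [NeZero m] (hm : 3 ≤ m) :
    ∀ t, t + 2 ≤ m → cfn φ ya yb (t + 2) (Pa m t) =
      (-1) ^ t * ((∏ j ∈ range t, φ (Pa m j) (yy ya yb j)) *
        ∑ k ∈ range (t + 1), φ (Pa m k) (ya * yb)) := by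
  intro t
  induction t with
  | zero =>
    intro _
    have h1 : cfn φ ya yb 1 (1 : DihedralGroup m) = ya := by
      rw [cfn_succ, cfn_zero, if_pos rfl, one_mul, one_mul]
      have : (la 0 : DihedralGroup m) ≠ 1 := by
        unfold la; rw [if_pos (Even.zero)]; simp [one_def, -r_zero]
      rw [cfn_zero, if_neg this, zero_mul, sub_zero, map_one]
      show yy ya yb 0 = ya
      simp [yy]
    have h2 : cfn φ ya yb 1 ((1 : DihedralGroup m) * la 1) = 0 := by
      rw [one_mul, cfn_succ, cfn_zero]
      have hla1 : (la 1 : DihedralGroup m) = sr 1 := by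
        unfold la; rw [if_neg (by simp)]
      have h3 : (la 1 : DihedralGroup m) ≠ 1 := by rw [hla1]; simp [one_def, -r_zero]
      rw [if_neg h3, zero_mul, zero_sub, neg_eq_zero]
      have hla0 : (la 0 : DihedralGroup m) = sr 0 := by
        unfold la; rw [if_pos Even.zero]
      have : (la 1 : DihedralGroup m) * la 0 ≠ 1 := by
        rw [hla1, hla0]
        simp only [sr_mul_sr, one_def]
        intro h
        have h' : ((0 : ZMod m) - 1) = 0 := by injection h
        have h1 : ((1 : ℕ) : ZMod m) = 0 := by push_cast; linear_combination -h'
        have := (ZMod.natCast_eq_zero_iff 1 m).mp h1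
        have := Nat.le_of_dvd one_pos this
        omega
      rw [cfn_zero, if_neg this, zero_mul]
    show cfn φ ya yb (0 + 1 + 1) (Pa m 0) = _
    rw [cfn_succ]
    have hPa0 : Pa m 0 = 1 := rfl
    rw [hPa0, h1, h2, zero_mul, sub_zero]
    simp only [pow_zero, prod_range_zero, one_mul, zero_add, sum_range_one, hPa0, map_one]
    show ya * yy ya yb 1 = ya * yb
    simp [yy]
  | succ t ih =>
    intro htm
    show cfn φ ya yb (t + 2 + 1) (Pa m (t + 1)) = _
    rw [cfn_succ]
    have hyy : yy ya yb (t + 2) = yy ya yb t := yy_congr ya yb (by simp [Nat.even_add_one, parity_simps])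
    have hla : (la (t + 2) : DihedralGroup m) = la t := la_congr (by simp [Nat.even_add_one, parity_simps])
    rw [hyy, hla, Pa_succ_cancel, cfn_sec φ ya yb hm (t + 1) (by omega), ih (by omega)]
    have hmul : (φ (Pa m (t + 1))) (yy ya yb (t + 1)) * (φ (Pa m (t + 1))) (yy ya yb t)
        = (φ (Pa m (t + 1))) (ya * yb) := by
      rw [← map_mul]
      congr 1
      by_cases h : Even t <;>
        simp [yy, h, Nat.even_add_one, mul_comm]
    have hprod : ∏ j ∈ range (t + 2), φ (Pa m j) (yy ya yb j)
        = (∏ j ∈ range (t + 1), φ (Pa m j) (yy ya yb j)) * (φ (Pa m (t + 1))) (yy ya yb (t + 1)) :=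
      prod_range_succ _ _
    have hprod2 : ∏ j ∈ range (t + 1), φ (Pa m j) (yy ya yb j)
        = (∏ j ∈ range t, φ (Pa m j) (yy ya yb j)) * (φ (Pa m t)) (yy ya yb t) :=
      prod_range_succ _ _
    have hsum : ∑ k ∈ range (t + 2), φ (Pa m k) (ya * yb)
        = (∑ k ∈ range (t + 1), φ (Pa m k) (ya * yb)) + (φ (Pa m (t + 1))) (ya * yb) :=
      sum_range_succ _ _
    rw [hprod, hsum]
    calc (-1) ^ (t + 1) * ((∏ j ∈ range (t + 1), (φ (Pa m j)) (yy ya yb j)) *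
            (φ (Pa m (t + 1))) (yy ya yb (t + 1))) * (φ (Pa m (t + 1))) (yy ya yb t)
          - (-1) ^ t * ((∏ j ∈ range t, (φ (Pa m j)) (yy ya yb j)) *
            ∑ k ∈ range (t + 1), (φ (Pa m k)) (ya * yb)) * (φ (Pa m t)) (yy ya yb t)
        = (-1) ^ (t + 1) * ((∏ j ∈ range (t + 1), (φ (Pa m j)) (yy ya yb j)) *
            ((φ (Pa m (t + 1))) (yy ya yb (t + 1)) * (φ (Pa m (t + 1))) (yy ya yb t)))
          + (-1) ^ (t + 1) * (((∏ j ∈ range t, (φ (Pa m j)) (yy ya yb j)) * (φ (Pa m t)) (yy ya yb t)) *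
            ∑ k ∈ range (t + 1), (φ (Pa m k)) (ya * yb)) := by ring
      _ = (-1) ^ (t + 1) * ((∏ j ∈ range (t + 1), (φ (Pa m j)) (yy ya yb j)) *
            ((∑ k ∈ range (t + 1), (φ (Pa m k)) (ya * yb)) + (φ (Pa m (t + 1))) (ya * yb))) := by
          rw [hmul, ← hprod2]; ring


variable [NeZero m] {A : Type*} [Ring A] (ι : Q →+* A) (δ : DihedralGroup m →* A)
  (hcomm : ∀ (w : DihedralGroup m) (q : Q), δ w * ι q = ι (φ w q) * δ w)

include hcomm in
/-- Expansion of the alternating Demazure product in the basis `{δ w}`. -/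
theorem expansion (n : ℕ) :
    altWord (ι ya * (1 - δ (sr 0))) (ι yb * (1 - δ (sr 1))) n =
      ∑ w : DihedralGroup m, ι (cfn φ ya yb n w) * δ w := by
  induction n with
  | zero =>
    show (1 : A) = _
    rw [Fintype.sum_eq_single (1 : DihedralGroup m)
      (fun w hw => by rw [cfn_zero, if_neg hw, map_zero, zero_mul])]
    rw [cfn_zero, if_pos rfl, map_one, one_mul, map_one]
  | succ n ih =>
    rw [altWord_succ_right, ih]
    have hX : (if Even n then ι ya * (1 - δ (sr 0)) else ι yb * (1 - δ (sr 1)))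
        = ι (yy ya yb n) * (1 - δ (la n)) := by
      by_cases h : Even n <;> simp [yy, la, h]
    rw [hX]
    rw [sum_mul]
    have hterm : ∀ w : DihedralGroup m,
        (ι (cfn φ ya yb n w) * δ w) * (ι (yy ya yb n) * (1 - δ (la n)))
          = ι (cfn φ ya yb n w * φ w (yy ya yb n)) * δ w
            - ι (cfn φ ya yb n w * φ w (yy ya yb n)) * δ (w * la n) := by
      intro w
      have h1 : δ w * ι (yy ya yb n) = ι ((φ w) (yy ya yb n)) * δ w := hcomm w _
      have h2 : δ w * δ (la n) = δ (w * la n) := (map_mul δ w (la n)).symm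
      calc ι (cfn φ ya yb n w) * δ w * (ι (yy ya yb n) * (1 - δ (la n)))
          = ι (cfn φ ya yb n w) * ((δ w * ι (yy ya yb n)) * (1 - δ (la n))) := by
            rw [mul_assoc, mul_assoc]
        _ = ι (cfn φ ya yb n w) * ((ι ((φ w) (yy ya yb n)) * δ w) * (1 - δ (la n))) := by
            rw [h1]
        _ = ι (cfn φ ya yb n w) * (ι ((φ w) (yy ya yb n)) * (δ w - δ (w * la n))) := by
            rw [mul_assoc, mul_sub, mul_one, h2]
        _ = ι (cfn φ ya yb n w * (φ w) (yy ya yb n)) * δ w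
            - ι (cfn φ ya yb n w * (φ w) (yy ya yb n)) * δ (w * la n) := by
            simp only [map_mul, mul_sub, mul_assoc]
    rw [Finset.sum_congr rfl (fun w _ => hterm w), Finset.sum_sub_distrib]
    have hre : ∑ w : DihedralGroup m, ι (cfn φ ya yb n w * φ w (yy ya yb n)) * δ (w * la n)
        = ∑ w : DihedralGroup m,
            ι (cfn φ ya yb n (w * la n) * φ (w * la n) (yy ya yb n)) * δ w := by
      apply Fintype.sum_equiv (Equiv.mulRight (la n : DihedralGroup m))
      intro w
      simp only [Equiv.coe_mulRight]
      rw [mul_assoc, la_mul_self, mul_one]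
    rw [hre, ← Finset.sum_sub_distrib]
    apply Finset.sum_congr rfl
    intro w _
    rw [cfn_succ, map_sub, sub_mul]

include hcomm in
/-- the coefficients are unique -/
theorem coeff_unique
    (hfree : ∀ cf : DihedralGroup m → Q,
      (∑ w : DihedralGroup m, ι (cf w) * δ w) = 0 → ∀ w, cf w = 0)
    (n : ℕ) (c : DihedralGroup m → Q)
    (hc : altWord (ι ya * (1 - δ (sr 0))) (ι yb * (1 - δ (sr 1))) n =
      ∑ w : DihedralGroup m, ι (c w) * δ w) :
    ∀ w, c w = cfn φ ya yb n w := by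
  intro w
  have h0 : ∑ w : DihedralGroup m, ι (c w - cfn φ ya yb n w) * δ w = 0 := by
    have := (expansion φ ya yb ι δ hcomm n).symm.trans hc
    calc ∑ w : DihedralGroup m, ι (c w - cfn φ ya yb n w) * δ w
        = (∑ w : DihedralGroup m, ι (c w) * δ w)
          - ∑ w : DihedralGroup m, ι (cfn φ ya yb n w) * δ w := by
          rw [← Finset.sum_sub_distrib]
          exact Finset.sum_congr rfl fun w _ => by rw [map_sub, sub_mul]
      _ = 0 := by rw [← this, sub_self]
  have := hfree _ h0 w
  exact sub_eq_zero.mp this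


end Coef


/-- Main auxiliary theorem: the coefficient of `δ_{α…}^{(m-2)}` in `X_{α…}^{(m)}`. -/
theorem main_aux (m : ℕ) [NeZero m] (hm : 3 ≤ m) {Q A : Type*} [CommRing Q] [Ring A]
    (φ : DihedralGroup m →* RingAut Q) (ι : Q →+* A) (δ : DihedralGroup m →* A)
    (hcomm : ∀ (w : DihedralGroup m) (q : Q), δ w * ι q = ι (φ w q) * δ w)
    (hfree : ∀ cf : DihedralGroup m → Q,
      (∑ w : DihedralGroup m, ι (cf w) * δ w) = 0 → ∀ w, cf w = 0)
    (ya yb : Q) (c : DihedralGroup m → Q)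
    (hc : altWord (ι ya * (1 - δ (sr 0))) (ι yb * (1 - δ (sr 1))) m =
      ∑ w : DihedralGroup m, ι (c w) * δ w) :
    c (altWord (sr 0) (sr 1) (m - 2)) =
      (-1) ^ m * ((∏ j ∈ range (m - 2),
          altWord (φ (sr 0)) (φ (sr 1)) j (if Even j then ya else yb)) *
        ∑ k ∈ Icc 0 (m - 2), altWord (φ (sr 0)) (φ (sr 1)) k (ya * yb)) := by
  have hcc := coeff_unique φ ya yb ι δ hcomm hfree m c hc
  obtain ⟨t, rfl⟩ : ∃ t, m = t + 2 := ⟨m - 2, by omega⟩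
  have ht2 : t + 2 - 2 = t := by omega
  rw [ht2]
  rw [hcc]
  have h1 : altWord (sr 0 : DihedralGroup (t + 2)) (sr 1) t = Pa (t + 2) t := rfl
  rw [h1, cfn_thr φ ya yb hm t le_rfl]
  have h2 : ∀ j : ℕ, altWord (φ (sr 0)) (φ (sr 1)) j = φ (Pa (t + 2) j) :=
    fun j => (map_altWord φ _ _ j).symm
  have h3 : Icc 0 t = range (t + 1) := by
    ext x; simp [Nat.lt_succ_iff]
  have h4 : ((-1 : Q) ^ (t + 2)) = (-1) ^ t := by
    rw [pow_succ, pow_succ]; ring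
  rw [h3, h4]
  congr 1
  congr 1
  · apply Finset.prod_congr rfl
    intro j _
    rw [h2 j]
    rfl
  · apply Finset.sum_congr rfl
    intro k _
    rw [h2 k]


end CoefAux

/-!
STATEMENT 4: For the dihedral group `W = I₂(m)` (`m ≥ 3`), when `X_{α…}^{(m)}` is
expanded in the `Q`-basis `{δ_w : w ∈ W}` of `Q_W`, the coefficient of
`δ_{α…}^{(m−2)}` equals `υ_α^{(2)} · S_α^{(0,m−2)}(y_α y_β)` if `m` is even, and
`−υ_α^{(2)} · S_α^{(0,m−2)}(y_α y_β)` if `m` is odd.  By symmetry (exchanging the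
roles of `α` and `β`), the coefficient of `δ_{β…}^{(m−2)}` in the expansion of
`X_{β…}^{(m)}` is the corresponding expression with `α` and `β` interchanged.

Here `υ_α^{(2)} = ∏_{j=0}^{m−3} s_{α…}^{(j)}(y_{ω_j})` and
`υ_β^{(2)} = ∏_{j=0}^{m−3} s_{β…}^{(j)}(y_{ω_{j+1}})` with `ω_j = α` for `j` even
and `ω_j = β` for `j` odd, and `S_α^{(0,m−2)} = Σ_{k=0}^{m−2} s_{α…}^{(k)}`.

Setting: `Q` is the localized formal root algebra of the root system of `I₂(m)`
over an integral domain `R`, `φ` the action of `W = DihedralGroup m` on `Q` with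
simple reflections `s_α = φ (sr 0)`, `s_β = φ (sr 1)`, `A = Q_W` the localized
twisted formal root algebra, free as a left `Q`-module with basis `{δ w}` (`hfree`),
`y_α, y_β` the inverses in `Q` of the simple-root classes `x_α, x_β ∈ S`,
`X_α = ι y_α (1 − δ_α)`, `X_β = ι y_β (1 − δ_β)`, and `c, c'` the coordinates of
`X_{α…}^{(m)}`, resp. `X_{β…}^{(m)}`, in the basis `{δ w}`.
-/
theorem coefficient_of_delta_m_sub_two
    (m : ℕ) [NeZero m] (hm : 3 ≤ m)
    {R S Q A : Type*} [CommRing R] [IsDomain R] [CommRing S] [Algebra R S]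
    [CommRing Q] [Algebra S Q] [Algebra R Q] [IsScalarTower R S Q] [Ring A]
    (φ : DihedralGroup m →* RingAut Q)
    (ι : Q →+* A) (hι : Function.Injective ι)
    (δ : DihedralGroup m →* A)
    (hcomm : ∀ (w : DihedralGroup m) (q : Q), δ w * ι q = ι (φ w q) * δ w)
    (hfree : ∀ cf : DihedralGroup m → Q,
      (∑ w : DihedralGroup m, ι (cf w) * δ w) = 0 → ∀ w, cf w = 0)
    (xα xβ : S) (yα yβ : Q)
    (hxα : algebraMap S Q xα * yα = 1) (hxβ : algebraMap S Q xβ * yβ = 1)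
    (Xα Xβ : A)
    (hXα : Xα = ι yα * (1 - δ (sr 0))) (hXβ : Xβ = ι yβ * (1 - δ (sr 1)))
    -- the coordinates of X_{α…}^{(m)} and X_{β…}^{(m)} in the basis {δ_w}
    (c c' : DihedralGroup m → Q)
    (hc : altWord Xα Xβ m = ∑ w : DihedralGroup m, ι (c w) * δ w)
    (hc' : altWord Xβ Xα m = ∑ w : DihedralGroup m, ι (c' w) * δ w) :
    ((Even m → c (altWord (sr 0) (sr 1) (m - 2)) =
        (∏ j ∈ range (m - 2),
            altWord (φ (sr 0)) (φ (sr 1)) j (if Even j then yα else yβ)) *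
          ∑ k ∈ Icc 0 (m - 2), altWord (φ (sr 0)) (φ (sr 1)) k (yα * yβ)) ∧
      (Odd m → c (altWord (sr 0) (sr 1) (m - 2)) =
        -((∏ j ∈ range (m - 2),
            altWord (φ (sr 0)) (φ (sr 1)) j (if Even j then yα else yβ)) *
          ∑ k ∈ Icc 0 (m - 2), altWord (φ (sr 0)) (φ (sr 1)) k (yα * yβ)))) ∧
    ((Even m → c' (altWord (sr 1) (sr 0) (m - 2)) =
        (∏ j ∈ range (m - 2),
            altWord (φ (sr 1)) (φ (sr 0)) j (if Even j then yβ else yα)) *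
          ∑ k ∈ Icc 0 (m - 2), altWord (φ (sr 1)) (φ (sr 0)) k (yβ * yα)) ∧
      (Odd m → c' (altWord (sr 1) (sr 0) (m - 2)) =
        -((∏ j ∈ range (m - 2),
            altWord (φ (sr 1)) (φ (sr 0)) j (if Even j then yβ else yα)) *
          ∑ k ∈ Icc 0 (m - 2), altWord (φ (sr 1)) (φ (sr 0)) k (yβ * yα)))) := by
  constructor
  · have h := CoefAux.main_aux m hm φ ι δ hcomm hfree yα yβ c (by rw [← hXα, ← hXβ]; exact hc)
    constructor
    · intro he
      rw [h, he.neg_one_pow, one_mul]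
    · intro ho
      rw [h, ho.neg_one_pow, neg_one_mul]
  · have hσ0 : (CoefAux.sw (sr 0) : DihedralGroup m) = sr 1 := by
      rw [CoefAux.sw_sr, sub_zero]
    have hσ1 : (CoefAux.sw (sr 1) : DihedralGroup m) = sr 0 := by
      rw [CoefAux.sw_sr, sub_self]
    set σ : DihedralGroup m →* DihedralGroup m := CoefAux.sw with hσ
    have hbij : Function.Bijective σ := CoefAux.sw_involutive.bijective
    set φ₂ : DihedralGroup m →* RingAut Q := φ.comp σ with hφ₂
    set δ₂ : DihedralGroup m →* A := δ.comp σ with hδ₂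
    have hcomm₂ : ∀ (w : DihedralGroup m) (q : Q), δ₂ w * ι q = ι (φ₂ w q) * δ₂ w :=
      fun w q => hcomm (σ w) q
    have hfree₂ : ∀ cf : DihedralGroup m → Q,
        (∑ w : DihedralGroup m, ι (cf w) * δ₂ w) = 0 → ∀ w, cf w = 0 := by
      intro cf h0 w
      have hre : ∑ x : DihedralGroup m, ι (cf (σ x)) * δ x
          = ∑ w : DihedralGroup m, ι (cf w) * δ₂ w := by
        apply Fintype.sum_bijective σ hbij
        intro x
        show ι (cf (σ x)) * δ x = ι (cf (σ x)) * δ (σ (σ x))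
        have h3 : σ (σ x) = x := CoefAux.sw_involutive x
        rw [h3]
      have h1 := hfree (fun v => cf (σ v)) (by rw [hre]; exact h0)
      have h2 := h1 (σ w)
      have h3 : σ (σ w) = w := CoefAux.sw_involutive w
      simp only [h3] at h2
      exact h2
    have hc₂ : altWord (ι yβ * (1 - δ₂ (sr 0))) (ι yα * (1 - δ₂ (sr 1))) m
        = ∑ w : DihedralGroup m, ι ((fun v => c' (σ v)) w) * δ₂ w := by
      have e0 : δ₂ (sr 0) = δ (sr 1) := by show δ (σ (sr 0)) = _; rw [hσ0]
      have e1 : δ₂ (sr 1) = δ (sr 0) := by show δ (σ (sr 1)) = _; rw [hσ1]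
      rw [e0, e1, ← hXβ, ← hXα, hc']
      apply Fintype.sum_bijective σ hbij
      intro x
      have h3 : σ (σ x) = x := CoefAux.sw_involutive x
      show ι (c' x) * δ x = ι (c' (σ (σ x))) * δ (σ (σ x))
      rw [h3]
    have h := CoefAux.main_aux m hm φ₂ ι δ₂ hcomm₂ hfree₂ yβ yα (fun v => c' (σ v)) hc₂
    have hL : (fun v => c' (σ v)) (altWord (sr 0) (sr 1) (m - 2))
        = c' (altWord (sr 1) (sr 0) (m - 2)) := by
      show c' (σ (altWord (sr 0) (sr 1) (m - 2))) = _
      rw [CoefAux.map_altWord σ, hσ0, hσ1]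
    have hR : ∀ j : ℕ, altWord (φ₂ (sr 0)) (φ₂ (sr 1)) j
        = altWord (φ (sr 1)) (φ (sr 0)) j := by
      intro j
      rw [← CoefAux.map_altWord φ₂, ← CoefAux.map_altWord φ]
      show φ (σ (altWord (sr 0) (sr 1) j)) = _
      rw [CoefAux.map_altWord σ, hσ0, hσ1]
    rw [show c' (σ (altWord (sr 0) (sr 1) (m - 2))) = c' (altWord (sr 1) (sr 0) (m - 2)) from hL] at h
    simp only [hR] at h
    constructor
    · intro he
      rw [h, he.neg_one_pow, one_mul]
    · intro ho
      rw [h, ho.neg_one_pow, neg_one_mul]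
end

section
/- Fix the dihedral group W = I₂(m), m ≥ 3. When the product X_{α…}^{(m)} is expanded in the Q-basis {δ_w : w ∈ W} of Q_W, the coefficient of δ_{β…}^{(m−3)} equals −y_α · υ_β^{(3)} · { S_β^{(0,m−3)}(y_α y_β) + s_α(y_α y_β) } if m is even, and y_α · υ_β^{(3)} · { S_β^{(0,m−3)}(y_α y_β) + s_α(y_α y_β) } if m is odd. By symmetry (exchanging the roles of α and β), the coefficient of δ_{α…}^{(m−3)} in the expansion of X_{β…}^{(m)} is the corresponding expression with α and β interchanged. -/
/-!
Left multiplication by `X_a = y_a (1 - δ_a)` sends `Σ_w g(w) δ_w` to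
`Σ_w y_a (g(w) - s_a(g(s_a w))) δ_w`, so the coefficients of `X_a X_b X_a ⋯` obey a recursion
along the alternating words `a_j = s_a s_b ⋯` and `b_j = s_b s_a ⋯`. In `I₂(m)` the alternating
words of length `≤ m` are reduced (their chambers `±j` in `ℤ/2m` are distinct), so a product of
`n ≤ m` factors has no coefficient at longer words. The recursion then closes on the coefficients
at `a_n`, `b_{n-1}`, `b_n`, `a_{n-2}` and `b_{n-3}`: twisted products of the `y`'s, times a
twisted sum of `y_a y_b` for the last two, computed in this order by induction on `n`.
-/

open Finset DihedralGroup

theorem altWord_succ {M : Type*} [Monoid M] (a b : M) (n : ℕ) :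
    altWord a b (n + 1) = a * altWord b a n := rfl

theorem mul_altWord_succ {M : Type*} [Monoid M] {a : M} (ha : a * a = 1) (b : M) (n : ℕ) :
    a * altWord a b (n + 1) = altWord b a n := by
  rw [altWord_succ, ← mul_assoc, ha, one_mul]

section TwistedProduct

variable {Q : Type*} [CommRing Q]

def twistedProd (σ τ : RingAut Q) (y z : Q) (n : ℕ) : Q :=
  ∏ j ∈ range n, altWord σ τ j (if Even j then y else z)

def twistedSum (σ τ : RingAut Q) (c : Q) (n : ℕ) : Q :=
  ∑ k ∈ Icc 0 n, altWord σ τ k c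

theorem twistedProd_zero (σ τ : RingAut Q) (y z : Q) : twistedProd σ τ y z 0 = 1 :=
  prod_range_zero _

theorem twistedProd_succ (σ τ : RingAut Q) (y z : Q) (n : ℕ) :
    twistedProd σ τ y z (n + 1) = y * σ (twistedProd τ σ z y n) := by
  rw [twistedProd, prod_range_succ', twistedProd, map_prod, mul_comm]
  congr 1
  refine prod_congr rfl fun j _ => ?_
  by_cases hj : Even j <;> simp [altWord_succ, hj, Nat.even_add_one]

theorem twistedSum_zero (σ τ : RingAut Q) (c : Q) : twistedSum σ τ c 0 = c := by
  simp [twistedSum, altWord]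

theorem twistedSum_succ (σ τ : RingAut Q) (c : Q) (n : ℕ) :
    twistedSum σ τ c (n + 1) = c + σ (twistedSum τ σ c n) := by
  rw [twistedSum, twistedSum, ← Nat.range_succ_eq_Icc_zero, ← Nat.range_succ_eq_Icc_zero,
    sum_range_succ', map_sum, add_comm]
  simp [altWord]

end TwistedProduct

section ShortWords

variable {W : Type*} [Monoid W]

def shortWords (sa sb : W) (n : ℕ) : Set W :=
  {w | ∃ j ≤ n, w = altWord sa sb j ∨ w = altWord sb sa j}

theorem shortWords_comm (sa sb : W) (n : ℕ) : shortWords sb sa n = shortWords sa sb n := by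
  ext w
  exact exists_congr fun _ => and_congr_right fun _ => or_comm

theorem shortWords_mono (sa sb : W) : Monotone (shortWords sa sb) :=
  fun _ _ hmn _ ⟨j, hj, hw⟩ => ⟨j, hj.trans hmn, hw⟩

theorem mem_shortWords_succ_of_mul_mem {sa : W} (hsa : sa * sa = 1) (sb : W) {n : ℕ} {w : W}
    (h : sa * w ∈ shortWords sa sb n) : w ∈ shortWords sa sb (n + 1) := by
  have hw : w = sa * (sa * w) := by rw [← mul_assoc, hsa, one_mul]
  obtain ⟨j, hj, h | h⟩ := h
  · cases j with
    | zero => exact ⟨1, by omega, .inl (by rw [hw, h]; rfl)⟩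
    | succ j => exact ⟨j, by omega, .inr (by rw [hw, h, mul_altWord_succ hsa])⟩
  · exact ⟨j + 1, by omega, .inl (by rw [hw, h]; rfl)⟩

def AltReduced (sa sb : W) (m : ℕ) : Prop :=
  ∀ n < m, altWord sa sb (n + 1) ∉ shortWords sa sb n ∧ altWord sb sa (n + 1) ∉ shortWords sa sb n

theorem AltReduced.symm {sa sb : W} {m : ℕ} (h : AltReduced sa sb m) : AltReduced sb sa m :=
  fun n hn => by rw [shortWords_comm]; exact (h n hn).symm

end ShortWords

section DemazureCoeff

variable {Q W : Type*} [CommRing Q] [Group W] (φ : W →* RingAut Q)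

theorem mul_one_sub_mul_sum {A : Type*} [Ring A] [Fintype W] (ι : Q →+* A) (δ : W →* A)
    (hcomm : ∀ (w : W) (q : Q), δ w * ι q = ι (φ w q) * δ w) (s : W) (q : Q) (g : W → Q) :
    ι q * (1 - δ s) * ∑ w, ι (g w) * δ w = ∑ w, ι (q * (g w - φ s (g (s⁻¹ * w)))) * δ w := by
  have hshift : ∑ w, ι (q * φ s (g w)) * δ (s * w) = ∑ w, ι (q * φ s (g (s⁻¹ * w))) * δ w := by
    simpa only [Equiv.coe_mulLeft, inv_mul_cancel_left] using
      Equiv.sum_comp (Equiv.mulLeft s) fun w => ι (q * φ s (g (s⁻¹ * w))) * δ w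
  have hterm : ∀ w, ι q * (1 - δ s) * (ι (g w) * δ w) =
      ι (q * g w) * δ w - ι (q * φ s (g w)) * δ (s * w) := fun w => by
    rw [mul_sub, mul_one, sub_mul, map_mul, map_mul, map_mul, mul_assoc, mul_assoc, mul_assoc,
      ← mul_assoc (δ s), hcomm, mul_assoc]
  rw [mul_sum, sum_congr rfl fun w _ => hterm w, sum_sub_distrib, hshift, ← sum_sub_distrib]
  exact sum_congr rfl fun w _ => by rw [mul_sub, map_sub, sub_mul]

theorem apply_apply_of_mul_self_eq_one {s : W} (hs : s * s = 1) (x : Q) : φ s (φ s x) = x := by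
  rw [← RingAut.mul_apply, ← map_mul, hs, map_one, RingAut.one_apply]

variable [DecidableEq W]

def demazureCoeff (sa sb : W) (ya yb : Q) : ℕ → W → Q
  | 0 => Pi.single 1 1
  | n + 1 => fun w =>
      ya * (demazureCoeff sb sa yb ya n w - φ sa (demazureCoeff sb sa yb ya n (sa * w)))

variable {φ} {sa sb : W} (ya yb : Q)

theorem demazureCoeff_succ (n : ℕ) (w : W) :
    demazureCoeff φ sa sb ya yb (n + 1) w =
      ya * (demazureCoeff φ sb sa yb ya n w - φ sa (demazureCoeff φ sb sa yb ya n (sa * w))) :=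
  rfl

theorem altWord_demazure_eq_sum {A : Type*} [Ring A] [Fintype W] (ι : Q →+* A) (δ : W →* A)
    (hcomm : ∀ (w : W) (q : Q), δ w * ι q = ι (φ w q) * δ w)
    (hsa : sa * sa = 1) (hsb : sb * sb = 1) (n : ℕ) :
    altWord (ι ya * (1 - δ sa)) (ι yb * (1 - δ sb)) n =
      ∑ w, ι (demazureCoeff φ sa sb ya yb n w) * δ w := by
  induction n generalizing sa sb ya yb with
  | zero =>
    rw [Fintype.sum_eq_single 1 fun w hw => by simp [demazureCoeff, hw]]
    simp [demazureCoeff, altWord]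
  | succ n ih =>
    rw [altWord_succ, ih yb ya hsb hsa, mul_one_sub_mul_sum φ ι δ hcomm,
      inv_eq_of_mul_eq_one_right hsa]
    rfl

theorem demazureCoeff_eq_zero (hsa : sa * sa = 1) (hsb : sb * sb = 1) {n : ℕ} {w : W}
    (hw : w ∉ shortWords sa sb n) : demazureCoeff φ sa sb ya yb n w = 0 := by
  induction n generalizing sa sb ya yb w with
  | zero =>
    have : w ≠ 1 := fun h => hw ⟨0, le_rfl, .inl h⟩
    simp [demazureCoeff, this]
  | succ n ih =>
    have h₁ : w ∉ shortWords sb sa n := by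
      rw [shortWords_comm]; exact fun h => hw (shortWords_mono _ _ n.le_succ h)
    have h₂ : sa * w ∉ shortWords sb sa n := by
      rw [shortWords_comm]; exact fun h => hw (mem_shortWords_succ_of_mul_mem hsa sb h)
    rw [demazureCoeff_succ, ih yb ya hsb hsa h₁, ih yb ya hsb hsa h₂]
    simp

variable {m : ℕ}

theorem demazureCoeff_altWord (hsa : sa * sa = 1) (hsb : sb * sb = 1)
    (hred : AltReduced sa sb m) {n : ℕ} (hn : n ≤ m) :
    demazureCoeff φ sa sb ya yb n (altWord sa sb n) =
      (-1) ^ n * twistedProd (φ sa) (φ sb) ya yb n := by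
  induction n generalizing sa sb ya yb with
  | zero => simp [demazureCoeff, altWord, twistedProd_zero]
  | succ n ih =>
    have hzero : demazureCoeff φ sb sa yb ya n (altWord sa sb (n + 1)) = 0 :=
      demazureCoeff_eq_zero yb ya hsb hsa (by rw [shortWords_comm]; exact (hred n hn).1)
    rw [demazureCoeff_succ, hzero, mul_altWord_succ hsa, ih yb ya hsb hsa hred.symm (by omega),
      twistedProd_succ]
    simp [pow_succ]
    ring

theorem demazureCoeff_succ_altWord_swap (hsa : sa * sa = 1) (hsb : sb * sb = 1)
    (hred : AltReduced sa sb m) {n : ℕ} (hn : n + 1 ≤ m) :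
    demazureCoeff φ sa sb ya yb (n + 1) (altWord sb sa n) =
      (-1) ^ n * (ya * twistedProd (φ sb) (φ sa) yb ya n) := by
  have hzero : demazureCoeff φ sb sa yb ya n (altWord sa sb (n + 1)) = 0 :=
    demazureCoeff_eq_zero yb ya hsb hsa (by rw [shortWords_comm]; exact (hred n hn).1)
  rw [demazureCoeff_succ, ← altWord_succ, hzero,
    demazureCoeff_altWord yb ya hsb hsa hred.symm (by omega), map_zero]
  ring

theorem demazureCoeff_succ_altWord_swap_succ (hsa : sa * sa = 1) (hsb : sb * sb = 1)
    (hred : AltReduced sa sb m) {n : ℕ} (hn : n + 1 < m) :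
    demazureCoeff φ sa sb ya yb (n + 1) (altWord sb sa (n + 1)) = 0 := by
  have h₁ : altWord sb sa (n + 1) ∉ shortWords sb sa n := by
    rw [shortWords_comm]; exact (hred n (by omega)).2
  have h₂ : altWord sa sb (n + 2) ∉ shortWords sb sa n := fun h =>
    (hred (n + 1) hn).1 (shortWords_mono _ _ n.le_succ (by rwa [shortWords_comm] at h))
  rw [demazureCoeff_succ, ← altWord_succ, demazureCoeff_eq_zero yb ya hsb hsa h₁,
    demazureCoeff_eq_zero yb ya hsb hsa h₂]
  simp

theorem demazureCoeff_add_two_altWord (hsa : sa * sa = 1) (hsb : sb * sb = 1)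
    (hred : AltReduced sa sb m) {n : ℕ} (hn : n + 2 ≤ m) :
    demazureCoeff φ sa sb ya yb (n + 2) (altWord sa sb n) =
      (-1) ^ n * (twistedProd (φ sa) (φ sb) ya yb n *
        twistedSum (φ sa) (φ sb) (ya * yb) n) := by
  induction n generalizing sa sb ya yb with
  | zero =>
    have h₁ := demazureCoeff_succ_altWord_swap (φ := φ) yb ya hsb hsa hred.symm
      (n := 0) (by omega)
    have h₂ := demazureCoeff_succ_altWord_swap_succ (φ := φ) yb ya hsb hsa hred.symm
      (n := 0) (by omega)
    rw [demazureCoeff_succ]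
    simp only [altWord, mul_one] at h₁ h₂ ⊢
    simp [h₁, h₂, twistedProd_zero, twistedSum_zero]
  | succ n ih =>
    rw [demazureCoeff_succ, mul_altWord_succ hsa, ih yb ya hsb hsa hred.symm (by omega),
      demazureCoeff_succ_altWord_swap yb ya hsb hsa hred.symm (by omega),
      twistedProd_succ, twistedSum_succ, mul_comm yb ya]
    simp [pow_succ]
    ring

theorem demazureCoeff_add_three_altWord_swap (hsa : sa * sa = 1) (hsb : sb * sb = 1)
    (hred : AltReduced sa sb m) {n : ℕ} (hn : n + 3 ≤ m) :
    demazureCoeff φ sa sb ya yb (n + 3) (altWord sb sa n) =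
      (-1) ^ n * (ya * twistedProd (φ sb) (φ sa) yb ya n *
        (twistedSum (φ sb) (φ sa) (ya * yb) n + φ sa (ya * yb))) := by
  rw [demazureCoeff_succ, ← altWord_succ,
    demazureCoeff_add_two_altWord yb ya hsb hsa hred.symm (by omega),
    demazureCoeff_succ_altWord_swap yb ya hsb hsa hred.symm (by omega),
    twistedProd_succ, mul_comm yb ya]
  simp only [map_mul, map_pow, map_neg, map_one, apply_apply_of_mul_self_eq_one φ hsa]
  ring

end DemazureCoeff

namespace DihedralGroup

def doubleHom (m : ℕ) : ZMod m →+ ZMod (2 * m) :=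
  ZMod.lift m ⟨zmultiplesHom _ 2, by
    simpa [mul_comm] using ZMod.natCast_self (2 * m)⟩

variable {m : ℕ}

theorem doubleHom_one : doubleHom m 1 = 2 := by
  rw [← Int.cast_one, doubleHom, ZMod.lift_coe]
  simp

/-- The chamber `w C₀` of `I₂(m)`, numbered `0, 1, …, 2m - 1` counterclockwise. -/
def chamber : DihedralGroup m → ZMod (2 * m)
  | r i => doubleHom m i
  | sr i => 1 - doubleHom m i

theorem chamber_sr_zero_mul (w : DihedralGroup m) : chamber (sr 0 * w) = 1 - chamber w := by
  cases w <;> simp [chamber]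

theorem chamber_sr_one_mul (w : DihedralGroup m) : chamber (sr 1 * w) = -1 - chamber w := by
  cases w <;> simp [chamber, doubleHom_one] <;> ring

theorem chamber_altWord (n : ℕ) :
    chamber (altWord (sr 0 : DihedralGroup m) (sr 1) n) = n ∧
      chamber (altWord (sr 1 : DihedralGroup m) (sr 0) n) = -n := by
  induction n with
  | zero => simp only [altWord, one_def, chamber, map_zero, Nat.cast_zero, neg_zero, and_self]
  | succ n ih =>
    rw [altWord_succ, altWord_succ, chamber_sr_zero_mul, chamber_sr_one_mul, ih.1, ih.2]
    constructor <;> push_cast <;> ring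

theorem altReduced_sr_zero_sr_one : AltReduced (sr 0 : DihedralGroup m) (sr 1) m := by
  have key : ∀ d : ℕ, 0 < d → d < 2 * m → (d : ZMod (2 * m)) ≠ 0 := fun d hd hdm h =>
    absurd (Nat.le_of_dvd hd ((ZMod.natCast_eq_zero_iff d _).1 h)) (by omega)
  intro n hn
  constructor <;> rintro ⟨j, hj, h | h⟩ <;> revert h <;> refine mt (congrArg chamber) ?_ <;>
    simp only [(chamber_altWord _).1, (chamber_altWord _).2] <;> intro h
  · exact key (n + 1 - j) (by omega) (by omega) (by rw [Nat.cast_sub (by omega), h, sub_self])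
  · exact key (n + 1 + j) (by omega) (by omega) (by rw [Nat.cast_add, h, neg_add_cancel])
  · exact key (n + 1 + j) (by omega) (by omega) (by rw [Nat.cast_add, ← h, add_neg_cancel])
  · exact key (n + 1 - j) (by omega) (by omega)
      (by rw [Nat.cast_sub (by omega), neg_inj.1 h, sub_self])

end DihedralGroup

theorem eq_of_sum_mul_eq {W Q A : Type*} [Fintype W] [CommRing Q] [Ring A] (ι : Q →+* A)
    (δ : W → A) (hfree : ∀ cf : W → Q, ∑ w, ι (cf w) * δ w = 0 → ∀ w, cf w = 0) {u v : W → Q}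
    (h : ∑ w, ι (u w) * δ w = ∑ w, ι (v w) * δ w) : u = v :=
  funext fun w => sub_eq_zero.1 <| hfree (u - v) (by simp [sub_mul, sum_sub_distrib, h]) w

theorem neg_one_pow_sub_three_mul_cases {R : Type*} [Ring R] {m : ℕ} (hm : 3 ≤ m) {v x : R}
    (h : v = (-1) ^ (m - 3) * x) : (Even m → v = -x) ∧ (Odd m → v = x) := by
  have hsign : (-1 : R) ^ (m - 3) = -(-1) ^ m := by
    conv_rhs => rw [← Nat.sub_add_cancel hm, pow_add]
    norm_num
  rw [h, hsign]
  exact ⟨fun he => by rw [he.neg_one_pow, neg_one_mul], fun ho => by simp [ho.neg_one_pow]⟩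

theorem coefficient_of_delta_m_sub_three_general
    (m : ℕ) [NeZero m] (hm : 3 ≤ m)
    {Q A : Type*}
    [CommRing Q] [Ring A]
    (φ : DihedralGroup m →* RingAut Q)
    (ι : Q →+* A)
    (δ : DihedralGroup m →* A)
    (hcomm : ∀ (w : DihedralGroup m) (q : Q), δ w * ι q = ι (φ w q) * δ w)
    (hfree : ∀ cf : DihedralGroup m → Q,
      (∑ w : DihedralGroup m, ι (cf w) * δ w) = 0 → ∀ w, cf w = 0)
    (yα yβ : Q)
    (Xα Xβ : A)
    (hXα : Xα = ι yα * (1 - δ (sr 0))) (hXβ : Xβ = ι yβ * (1 - δ (sr 1)))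
    (c c' : DihedralGroup m → Q)
    (hc : altWord Xα Xβ m = ∑ w : DihedralGroup m, ι (c w) * δ w)
    (hc' : altWord Xβ Xα m = ∑ w : DihedralGroup m, ι (c' w) * δ w) :
    ((Even m → c (altWord (sr 1) (sr 0) (m - 3)) =
        -(yα * (∏ j ∈ range (m - 3),
            altWord (φ (sr 1)) (φ (sr 0)) j (if Even j then yβ else yα)) *
          ((∑ k ∈ Icc 0 (m - 3), altWord (φ (sr 1)) (φ (sr 0)) k (yα * yβ)) +
            φ (sr 0) (yα * yβ)))) ∧
      (Odd m → c (altWord (sr 1) (sr 0) (m - 3)) =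
        yα * (∏ j ∈ range (m - 3),
            altWord (φ (sr 1)) (φ (sr 0)) j (if Even j then yβ else yα)) *
          ((∑ k ∈ Icc 0 (m - 3), altWord (φ (sr 1)) (φ (sr 0)) k (yα * yβ)) +
            φ (sr 0) (yα * yβ)))) ∧
    ((Even m → c' (altWord (sr 0) (sr 1) (m - 3)) =
        -(yβ * (∏ j ∈ range (m - 3),
            altWord (φ (sr 0)) (φ (sr 1)) j (if Even j then yα else yβ)) *
          ((∑ k ∈ Icc 0 (m - 3), altWord (φ (sr 0)) (φ (sr 1)) k (yβ * yα)) +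
            φ (sr 1) (yβ * yα)))) ∧
      (Odd m → c' (altWord (sr 0) (sr 1) (m - 3)) =
        yβ * (∏ j ∈ range (m - 3),
            altWord (φ (sr 0)) (φ (sr 1)) j (if Even j then yα else yβ)) *
          ((∑ k ∈ Icc 0 (m - 3), altWord (φ (sr 0)) (φ (sr 1)) k (yβ * yα)) +
            φ (sr 1) (yβ * yα)))) := by
  have hs₀ : (sr 0 : DihedralGroup m) * sr 0 = 1 := sr_mul_self 0
  have hs₁ : (sr 1 : DihedralGroup m) * sr 1 = 1 := sr_mul_self 1
  have hred : AltReduced (sr 0 : DihedralGroup m) (sr 1) m := altReduced_sr_zero_sr_one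
  have hcα : c = demazureCoeff φ (sr 0) (sr 1) yα yβ m := eq_of_sum_mul_eq ι δ hfree <| by
    rw [← hc, hXα, hXβ, altWord_demazure_eq_sum yα yβ ι δ hcomm hs₀ hs₁]
  have hcβ : c' = demazureCoeff φ (sr 1) (sr 0) yβ yα m := eq_of_sum_mul_eq ι δ hfree <| by
    rw [← hc', hXα, hXβ, altWord_demazure_eq_sum yβ yα ι δ hcomm hs₁ hs₀]
  have hm3 : m - 3 + 3 = m := by omega
  have hα := demazureCoeff_add_three_altWord_swap (φ := φ) yα yβ hs₀ hs₁ hred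
    (n := m - 3) (by omega)
  have hβ := demazureCoeff_add_three_altWord_swap (φ := φ) yβ yα hs₁ hs₀ hred.symm
    (n := m - 3) (by omega)
  rw [hm3, ← hcα] at hα
  rw [hm3, ← hcβ] at hβ
  exact ⟨neg_one_pow_sub_three_mul_cases hm hα, neg_one_pow_sub_three_mul_cases hm hβ⟩

theorem coefficient_of_delta_m_sub_three
    (m : ℕ) [NeZero m] (hm : 3 ≤ m)
    {R S Q A : Type*} [CommRing R] [IsDomain R] [CommRing S] [Algebra R S]
    [CommRing Q] [Algebra S Q] [Algebra R Q] [IsScalarTower R S Q] [Ring A]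
    (φ : DihedralGroup m →* RingAut Q)
    (ι : Q →+* A) (hι : Function.Injective ι)
    (δ : DihedralGroup m →* A)
    (hcomm : ∀ (w : DihedralGroup m) (q : Q), δ w * ι q = ι (φ w q) * δ w)
    (hfree : ∀ cf : DihedralGroup m → Q,
      (∑ w : DihedralGroup m, ι (cf w) * δ w) = 0 → ∀ w, cf w = 0)
    (xα xβ : S) (yα yβ : Q)
    (hxα : algebraMap S Q xα * yα = 1) (hxβ : algebraMap S Q xβ * yβ = 1)
    (Xα Xβ : A)
    (hXα : Xα = ι yα * (1 - δ (sr 0))) (hXβ : Xβ = ι yβ * (1 - δ (sr 1)))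
    (c c' : DihedralGroup m → Q)
    (hc : altWord Xα Xβ m = ∑ w : DihedralGroup m, ι (c w) * δ w)
    (hc' : altWord Xβ Xα m = ∑ w : DihedralGroup m, ι (c' w) * δ w) :
    ((Even m → c (altWord (sr 1) (sr 0) (m - 3)) =
        -(yα * (∏ j ∈ range (m - 3),
            altWord (φ (sr 1)) (φ (sr 0)) j (if Even j then yβ else yα)) *
          ((∑ k ∈ Icc 0 (m - 3), altWord (φ (sr 1)) (φ (sr 0)) k (yα * yβ)) +
            φ (sr 0) (yα * yβ)))) ∧
      (Odd m → c (altWord (sr 1) (sr 0) (m - 3)) =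
        yα * (∏ j ∈ range (m - 3),
            altWord (φ (sr 1)) (φ (sr 0)) j (if Even j then yβ else yα)) *
          ((∑ k ∈ Icc 0 (m - 3), altWord (φ (sr 1)) (φ (sr 0)) k (yα * yβ)) +
            φ (sr 0) (yα * yβ)))) ∧
    ((Even m → c' (altWord (sr 0) (sr 1) (m - 3)) =
        -(yβ * (∏ j ∈ range (m - 3),
            altWord (φ (sr 0)) (φ (sr 1)) j (if Even j then yα else yβ)) *
          ((∑ k ∈ Icc 0 (m - 3), altWord (φ (sr 0)) (φ (sr 1)) k (yβ * yα)) +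
            φ (sr 1) (yβ * yα)))) ∧
      (Odd m → c' (altWord (sr 0) (sr 1) (m - 3)) =
        yβ * (∏ j ∈ range (m - 3),
            altWord (φ (sr 0)) (φ (sr 1)) j (if Even j then yα else yβ)) *
          ((∑ k ∈ Icc 0 (m - 3), altWord (φ (sr 0)) (φ (sr 1)) k (yβ * yα)) +
            φ (sr 1) (yβ * yα)))) :=
  coefficient_of_delta_m_sub_three_general m hm φ ι δ hcomm hfree yα yβ Xα Xβ hXα hXβ c c' hc hc'
end
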